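/- arXiv:1311.5293 — 3 statements merged into one kernel-verified Lean document; each statement's English description precedes it below -/
import Mathlib

section
/- Let K₁ ⊆ K₂ be compact metric spaces and let d ≥ 1 be an integer. Let R : C(K₂, ℝ^d) → C(K₁, ℝ^d) be the restriction map R(f) = f|_{K₁}. If A ⊆ C(K₁, ℝ^d) is prevalent, then R⁻¹(A) is prevalent in C(K₂, ℝ^d). -/
open MeasureTheory Set Filter Topology

noncomputable section

/-- A set in an abelian topological group is *shy* (Haar null, in the sense of Christensen)
if it is contained in a Borel set `B` for which there is a Borel probability measure `μ`
with `μ (B + x) = 0` for every `x`. -/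
def IsShy {G : Type*} [TopologicalSpace G] [AddCommGroup G] (A : Set G) : Prop :=
  ∃ B : Set G, MeasurableSet[borel G] B ∧ A ⊆ B ∧
    ∃ μ : @Measure G (borel G), @IsProbabilityMeasure G (borel G) μ ∧
      ∀ x : G, μ ((fun b => b + x) '' B) = 0

/-- A set is *prevalent* if its complement is shy. -/
def IsPrevalent {G : Type*} [TopologicalSpace G] [AddCommGroup G] (A : Set G) : Prop :=
  IsShy Aᶜ

/-- A set is *Haar ambivalent* if it is neither shy nor prevalent. -/
def IsHaarAmbivalent {G : Type*} [TopologicalSpace G] [AddCommGroup G] (A : Set G) : Prop :=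
  ¬ IsShy A ∧ ¬ IsShy Aᶜ

/-- A surjective continuous linear map between Banach spaces (with separable domain) admits a
Borel measurable right inverse, built by successive approximation along a dense sequence. -/
lemma exists_borel_section {E F : Type*} [NormedAddCommGroup E] [NormedSpace ℝ E]
    [CompleteSpace E] [TopologicalSpace.SeparableSpace E]
    [NormedAddCommGroup F] [NormedSpace ℝ F] [CompleteSpace F]
    (L : E →L[ℝ] F) (hL : Function.Surjective L) :
    ∃ T : F → E, @Measurable F E (borel F) (borel E) T ∧ ∀ y, L (T y) = y := by
  classical
  borelize E F
  haveI : SecondCountableTopology E := UniformSpace.secondCountable_of_separable E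
  haveI : TopologicalSpace.SeparableSpace F := hL.denseRange.separableSpace L.continuous
  haveI : SecondCountableTopology F := UniformSpace.secondCountable_of_separable F
  obtain ⟨C, hC0, hC⟩ := ContinuousLinearMap.exists_preimage_norm_le L hL
  haveI : Nonempty E := ⟨0⟩
  set D : ℕ → E := TopologicalSpace.denseSeq E with hD
  have hDd : DenseRange D := TopologicalSpace.denseRange_denseSeq E
  -- Step 1: measurable approximate sections at any scale δ.
  have key : ∀ δ : ℝ, 0 < δ → ∃ σ : F → E, Measurable σ ∧
      ∀ y, ‖L (σ y) - y‖ < δ ∧ ‖σ y‖ ≤ C * ‖y‖ + δ := by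
    intro δ hδ
    set p : F → ℕ → Prop := fun y n => ‖L (D n) - y‖ < δ ∧ ‖D n‖ ≤ C * ‖y‖ + δ with hp
    have hex : ∀ y, ∃ n, p y n := by
      intro y
      obtain ⟨x, hx, hxn⟩ := hC y
      have hδ' : 0 < min δ (δ / (‖L‖ + 1)) := lt_min hδ (div_pos hδ (by positivity))
      obtain ⟨n, hn⟩ := Metric.denseRange_iff.mp hDd x _ hδ'
      have hdn : ‖D n - x‖ < min δ (δ / (‖L‖ + 1)) := by
        rwa [← dist_eq_norm, dist_comm]
      refine ⟨n, ?_, ?_⟩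
      · have h1 : ‖L (D n) - y‖ = ‖L (D n - x)‖ := by rw [map_sub, hx]
        have h2 : ‖L (D n - x)‖ ≤ ‖L‖ * ‖D n - x‖ := L.le_opNorm _
        have h3 : ‖L‖ * ‖D n - x‖ ≤ ‖L‖ * (δ / (‖L‖ + 1)) :=
          mul_le_mul_of_nonneg_left (le_of_lt (lt_of_lt_of_le hdn (min_le_right _ _)))
            (norm_nonneg _)
        have h4 : ‖L‖ * (δ / (‖L‖ + 1)) < δ := by
          have hpos : (0:ℝ) < ‖L‖ + 1 := by positivity
          calc ‖L‖ * (δ / (‖L‖ + 1)) < (‖L‖ + 1) * (δ / (‖L‖ + 1)) :=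
                mul_lt_mul_of_pos_right (by linarith) (div_pos hδ hpos)
            _ = δ := by field_simp
        rw [h1]; linarith
      · have h1 : ‖D n‖ ≤ ‖x‖ + ‖D n - x‖ := by
          calc ‖D n‖ = ‖x + (D n - x)‖ := by rw [add_sub_cancel]
            _ ≤ ‖x‖ + ‖D n - x‖ := norm_add_le _ _
        have h2 : ‖D n - x‖ ≤ δ := le_of_lt (lt_of_lt_of_le hdn (min_le_left _ _))
        linarith
    refine ⟨fun y => D (Nat.find (hex y)), ?_, fun y => Nat.find_spec (hex y)⟩
    have hmeas : ∀ n, MeasurableSet {y | p y n} := by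
      intro n
      have ho : IsOpen {y : F | ‖L (D n) - y‖ < δ} := by
        have : Continuous fun y : F => ‖L (D n) - y‖ := by continuity
        exact isOpen_lt this continuous_const
      have hc : IsClosed {y : F | ‖D n‖ ≤ C * ‖y‖ + δ} := by
        have : Continuous fun y : F => C * ‖y‖ + δ := by continuity
        exact isClosed_le continuous_const this
      exact ho.measurableSet.inter hc.measurableSet
    exact (measurable_of_countable D).comp (measurable_find hex hmeas)
  -- Step 2: choose approximate sections at geometric scales.
  have hpow : ∀ k : ℕ, (0:ℝ) < (1/2) ^ (k+1) := fun k => by positivity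
  choose σ hσm hσ using fun k : ℕ => key ((1/2) ^ (k+1)) (hpow k)
  -- residuals
  let r : ℕ → F → F := fun k => Nat.rec (fun y => y - L (σ 0 y))
    (fun k rk y => rk y - L (σ (k+1) (rk y))) k
  -- increments
  let u : ℕ → F → E := fun k => Nat.casesOn k (σ 0) (fun k' y => σ (k'+1) (r k' y))
  have hr_succ : ∀ k y, r (k+1) y = r k y - L (u (k+1) y) := fun k y => rfl
  have hrm : ∀ k, Measurable (r k) := by
    intro k
    induction k with
    | zero => exact measurable_id.sub (L.continuous.measurable.comp (hσm 0))
    | succ k ih => exact ih.sub (L.continuous.measurable.comp ((hσm (k+1)).comp ih))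
  have hum : ∀ k, Measurable (u k) := by
    intro k
    cases k with
    | zero => exact hσm 0
    | succ k => exact (hσm (k+1)).comp (hrm k)
  have hr : ∀ k y, ‖r k y‖ < (1/2) ^ (k+1) := by
    intro k
    induction k with
    | zero =>
      intro y
      have h := (hσ 0 y).1
      have : r 0 y = -(L (σ 0 y) - y) := by show y - L (σ 0 y) = _; abel
      rw [this, norm_neg]; exact h
    | succ k ih =>
      intro y
      have h := (hσ (k+1) (r k y)).1
      have : r (k+1) y = -(L (σ (k+1) (r k y)) - r k y) := by
        show r k y - L (σ (k+1) (r k y)) = _; abel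
      rw [this, norm_neg]; exact h
  have hu : ∀ k y, ‖u (k+1) y‖ ≤ (C+1) * (1/2) ^ (k+1) := by
    intro k y
    have h1 : ‖σ (k+1) (r k y)‖ ≤ C * ‖r k y‖ + (1/2) ^ (k+2) := (hσ (k+1) (r k y)).2
    have h2 : C * ‖r k y‖ ≤ C * (1/2) ^ (k+1) :=
      mul_le_mul_of_nonneg_left (hr k y).le hC0.le
    have h3 : ((1:ℝ)/2) ^ (k+2) ≤ (1/2) ^ (k+1) := by
      apply pow_le_pow_of_le_one (by norm_num) (by norm_num)
      omega
    show ‖σ (k+1) (r k y)‖ ≤ (C+1) * (1/2) ^ (k+1)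
    calc ‖σ (k+1) (r k y)‖ ≤ C * ‖r k y‖ + (1/2) ^ (k+2) := h1
      _ ≤ C * (1/2) ^ (k+1) + (1/2) ^ (k+1) := by linarith
      _ = (C+1) * (1/2) ^ (k+1) := by ring
  have hgeo : Summable fun k : ℕ => ((C+1) * (1/2)) * (1/2 : ℝ) ^ k :=
    (summable_geometric_of_lt_one (by norm_num) (by norm_num)).mul_left _
  have hsum : ∀ y, Summable fun k => u k y := by
    intro y
    rw [← summable_nat_add_iff 1]
    have hgeo' : Summable fun k : ℕ => (C + 1) * (1 / 2 : ℝ) ^ (k + 1) := by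
      refine hgeo.congr fun k => ?_
      ring
    exact Summable.of_norm_bounded hgeo' (fun k => hu k y)
  set T : F → E := fun y => ∑' k, u k y with hT
  have hpart : ∀ y n, ∑ k ∈ Finset.range (n+1), L (u k y) = y - r n y := by
    intro y n
    induction n with
    | zero =>
      rw [zero_add, Finset.sum_range_one]
      show L (σ 0 y) = y - (y - L (σ 0 y))
      abel
    | succ n ih =>
      rw [Finset.sum_range_succ, ih, hr_succ]
      abel
  have hTy : ∀ y, L (T y) = y := by
    intro y
    have h1 : HasSum (fun k => L (u k y)) (L (T y)) := L.hasSum (hsum y).hasSum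
    have h2 : Tendsto (fun n => ∑ k ∈ Finset.range n, L (u k y)) atTop (𝓝 (L (T y))) :=
      h1.tendsto_sum_nat
    have h3 : Tendsto (fun n => ∑ k ∈ Finset.range (n+1), L (u k y)) atTop (𝓝 (L (T y))) :=
      h2.comp (tendsto_add_atTop_nat 1)
    have h3' : Tendsto (fun n => y - r n y) atTop (𝓝 (L (T y))) :=
      h3.congr fun n => hpart y n
    have hr0 : Tendsto (fun n => r n y) atTop (𝓝 0) := by
      have hgl : Tendsto (fun n : ℕ => ((1:ℝ)/2) ^ (n+1)) atTop (𝓝 0) :=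
        (tendsto_pow_atTop_nhds_zero_of_lt_one (by norm_num) (by norm_num)).comp
          (tendsto_add_atTop_nat 1)
      exact squeeze_zero_norm (fun n => (hr n y).le) hgl
    have h4 : Tendsto (fun n => y - r n y) atTop (𝓝 y) := by
      have := (tendsto_const_nhds (x := y)).sub hr0
      rwa [sub_zero] at this
    exact (tendsto_nhds_unique h3' h4).symm ▸ rfl
  have hTm : Measurable T := by
    refine measurable_of_tendsto_metrizable' (f := fun n y => ∑ k ∈ Finset.range n, u k y) atTop
      (fun n => Finset.measurable_sum _ fun k _ => hum k) ?_
    rw [tendsto_pi_nhds]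
    intro y
    exact (hsum y).hasSum.tendsto_sum_nat
  exact ⟨T, hTm, hTy⟩

/-- Let `K₁ ⊆ K₂` be compact metric spaces, `d ≥ 1`, and `R : C(K₂, ℝᵈ) → C(K₁, ℝᵈ)` the
restriction map. If `A ⊆ C(K₁, ℝᵈ)` is prevalent, then `R⁻¹(A)` is prevalent. -/
theorem prevalent_preimage_restriction {K₂ : Type*} [MetricSpace K₂] [CompactSpace K₂]
    (K₁ : Set K₂) (hK₁ : IsCompact K₁) (d : ℕ) (hd : 1 ≤ d)
    (A : Set C(↥K₁, Fin d → ℝ)) (hA : IsPrevalent A) :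
    IsPrevalent ((fun f : C(K₂, Fin d → ℝ) => f.restrict K₁) ⁻¹' A) := by
  classical
  haveI : CompactSpace ↥K₁ := isCompact_iff_compactSpace.mp hK₁
  set E := C(K₂, Fin d → ℝ)
  set F := C(↥K₁, Fin d → ℝ)
  -- the restriction map as a continuous linear map
  let L : E →L[ℝ] F :=
    LinearMap.mkContinuous
      { toFun := fun f => f.restrict K₁
        map_add' := fun f g => by ext x; rfl
        map_smul' := fun c f => by ext x; rfl } 1
      (fun f => by
        rw [one_mul]
        refine (ContinuousMap.norm_le _ (norm_nonneg f)).mpr fun x => ?_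
        exact f.norm_coe_le_norm x.1)
  have hLfun : ∀ f : E, L f = f.restrict K₁ := fun f => rfl
  have hLsurj : Function.Surjective L := by
    intro f
    obtain ⟨g, hg⟩ := f.exists_restrict_eq hK₁.isClosed
    exact ⟨g, hg⟩
  obtain ⟨T, hTm, hTy⟩ := exists_borel_section L hLsurj
  obtain ⟨B, hB, hAB, μ, hμ, hμ0⟩ := hA
  letI mE : MeasurableSpace E := borel E
  haveI : BorelSpace E := ⟨rfl⟩
  letI mF : MeasurableSpace F := borel F
  haveI : BorelSpace F := ⟨rfl⟩
  have hLmeas : Measurable (L : E → F) := L.continuous.measurable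
  refine ⟨(fun f : E => f.restrict K₁) ⁻¹' B, ?_, ?_, μ.map T, ?_, ?_⟩
  · exact hLmeas hB
  · intro g hg
    exact hAB hg
  · exact Measure.isProbabilityMeasure_map hTm.aemeasurable
  -- translation invariance computation
  · intro g
    have himg : ((fun b => b + g) '' ((fun f : E => f.restrict K₁) ⁻¹' B))
        = (L : E → F) ⁻¹' ((fun b => b + L g) '' B) := by
      ext h
      simp only [Set.mem_image, Set.mem_preimage]
      constructor
      · rintro ⟨b, hb, rfl⟩
        exact ⟨L b, hb, (map_add L b g).symm⟩
      · rintro ⟨b, hb, hbe⟩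
        refine ⟨h - g, ?_, by abel⟩
        have : L (h - g) = b := by
          rw [map_sub, ← hbe]; abel
        show (h - g).restrict K₁ ∈ B
        rw [← hLfun (h - g), this]; exact hb
    have hBim : MeasurableSet ((fun b => b + L g) '' B) := by
      have : (fun b => b + L g) '' B = (fun b : F => b + (- L g)) ⁻¹' B := by
        ext b
        simp only [Set.mem_image, Set.mem_preimage]
        constructor
        · rintro ⟨c, hc, rfl⟩; convert hc using 1; abel
        · intro hb; exact ⟨b + -L g, hb, by abel⟩
      rw [this]
      exact (measurable_id.add_const _) hB
    rw [himg, Measure.map_apply hTm (hLmeas hBim)]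
    have hpre : T ⁻¹' ((L : E → F) ⁻¹' ((fun b => b + L g) '' B))
        = (fun b => b + L g) '' B := by
      ext y
      simp only [Set.mem_preimage, hTy y]
    rw [hpre]
    exact hμ0 (L g)
end
end

section
/- Let G be an abelian Polish group and A ⊆ G. If for every compact set K ⊆ G there exists g ∈ G such that K + g ⊆ A, then A is not shy. -/
open MeasureTheory Set Filter Topology

noncomputable section

open scoped ENNReal in
/-- Tightness: a probability measure on a complete separable metric space gives positive
mass to some compact set. -/
lemma exists_isCompact_measure_ne_zero {G : Type*} [MetricSpace G] [CompleteSpace G]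
    [SecondCountableTopology G] [MeasurableSpace G] [OpensMeasurableSpace G]
    (μ : Measure G) [IsProbabilityMeasure μ] : ∃ K : Set G, IsCompact K ∧ μ K ≠ 0 := by
  have hμuniv : μ Set.univ = 1 := measure_univ
  rcases isEmpty_or_nonempty G with hG | hG
  · rw [Set.univ_eq_empty_iff.2 hG, measure_empty] at hμuniv
    exact absurd hμuniv zero_ne_one
  obtain ⟨u, hu⟩ := TopologicalSpace.exists_dense_seq G
  set ε : ℕ → ℝ≥0∞ := fun m => (2 : ℝ≥0∞)⁻¹ ^ (m + 2) with hε
  have hεle1 : ∀ m, ε m ≤ 1 := fun m =>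
    pow_le_one₀ (zero_le) (by simp [ENNReal.inv_le_one, one_le_two])
  have hεpos : ∀ m, 0 < ε m := fun m => by
    apply ENNReal.pow_pos
    simp
  set U : ℕ → ℕ → Set G := fun m n =>
    ⋃ i ∈ Finset.range n, Metric.closedBall (u i) (1 / (m + 1)) with hU
  have hUclosed : ∀ m n, IsClosed (U m n) := fun m n =>
    Set.Finite.isClosed_biUnion (Finset.finite_toSet _)
      fun i _ => Metric.isClosed_closedBall
  have hUmono : ∀ m, Monotone (U m) := by
    intro m a b hab
    exact Set.biUnion_subset_biUnion_left (Finset.coe_subset.2 (Finset.range_subset_range.2 hab))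
  have hUunion : ∀ m, (⋃ n, U m n) = Set.univ := by
    intro m
    apply Set.eq_univ_of_forall
    intro x
    have hpos : (0 : ℝ) < 1 / (m + 1) := by positivity
    obtain ⟨i, hi⟩ := Metric.denseRange_iff.1 hu x (1 / (m + 1)) hpos
    exact Set.mem_iUnion.2 ⟨i + 1, Set.mem_biUnion (Finset.mem_range.2 (by omega))
      (Metric.mem_closedBall.2 hi.le)⟩
  -- choose large enough finite unions
  have hN : ∀ m, ∃ n, μ (U m n)ᶜ ≤ ε m := by
    intro m
    have htendsto := tendsto_measure_iUnion_atTop (μ := μ) (hUmono m)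
    rw [hUunion m, hμuniv] at htendsto
    have hlt : (1 : ℝ≥0∞) - ε m < 1 := ENNReal.sub_lt_self ENNReal.one_ne_top one_ne_zero
      (hεpos m).ne'
    obtain ⟨n, hn⟩ := (htendsto.eventually (eventually_gt_nhds hlt)).exists
    refine ⟨n, ?_⟩
    rw [prob_compl_eq_one_sub (hUclosed m n).measurableSet]
    rw [tsub_le_iff_right]
    calc (1 : ℝ≥0∞) = (1 - ε m) + ε m := (tsub_add_cancel_of_le (hεle1 m)).symm
      _ ≤ μ (U m n) + ε m := by gcongr; exact hn.le
      _ ≤ ε m + μ (U m n) := by rw [add_comm]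
  choose N hNle using hN
  set K : Set G := ⋂ m, U m (N m) with hK
  have hKclosed : IsClosed K := isClosed_iInter fun m => hUclosed m (N m)
  have hKcompact : IsCompact K := by
    refine TotallyBounded.isCompact_of_isClosed (Metric.totallyBounded_iff.2 ?_) hKclosed
    intro δ hδ
    obtain ⟨m, hm⟩ := exists_nat_one_div_lt hδ
    refine ⟨u '' (Set.Iio (N m)), (Set.finite_Iio _).image _, ?_⟩
    intro x hx
    have hx' : x ∈ U m (N m) := Set.mem_iInter.1 hx m
    obtain ⟨i, hi, hxi⟩ := Set.mem_iUnion₂.1 hx'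
    refine Set.mem_biUnion ⟨i, Finset.mem_range.1 hi, rfl⟩ ?_
    exact Metric.mem_ball'.2 (lt_of_le_of_lt (Metric.mem_closedBall'.2 hxi) hm)
  refine ⟨K, hKcompact, ?_⟩
  intro hK0
  have hcompl : μ Kᶜ = 1 := by
    rw [prob_compl_eq_one_sub hKclosed.measurableSet, hK0, tsub_zero]
  have hle : μ Kᶜ ≤ ∑' m, ε m := by
    rw [hK, Set.compl_iInter]
    exact le_trans (measure_iUnion_le _) (ENNReal.tsum_le_tsum fun m => hNle m)
  have hsum : ∑' m, ε m = 2⁻¹ := by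
    have : ∀ m, ε m = (2 : ℝ≥0∞)⁻¹ ^ 2 * (2 : ℝ≥0∞)⁻¹ ^ m := by
      intro m; rw [hε, ← pow_add, add_comm]
    rw [tsum_congr this, ENNReal.tsum_mul_left, ENNReal.tsum_geometric,
      ENNReal.one_sub_inv_two, inv_inv, pow_two, mul_assoc,
      ENNReal.inv_mul_cancel two_ne_zero ENNReal.ofNat_ne_top, mul_one]
  rw [hcompl, hsum] at hle
  exact absurd hle (not_le.2 (ENNReal.inv_lt_one.2 ENNReal.one_lt_two))

/-- In an abelian Polish group `G`, if a set `A` contains a translate of every compact set,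
then `A` is not shy. -/
theorem not_shy_of_translate_of_compact {G : Type*} [TopologicalSpace G] [AddCommGroup G]
    [IsTopologicalAddGroup G] [PolishSpace G] (A : Set G)
    (h : ∀ K : Set G, IsCompact K → ∃ g : G, (fun k => k + g) '' K ⊆ A) :
    ¬ IsShy A := by
  rintro ⟨B, hB, hAB, μ, hμ, hμ0⟩
  letI : MeasurableSpace G := borel G
  haveI : BorelSpace G := ⟨rfl⟩
  haveI := hμ
  letI := TopologicalSpace.upgradeIsCompletelyMetrizable G
  obtain ⟨K, hKc, hKpos⟩ := exists_isCompact_measure_ne_zero μ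
  obtain ⟨g, hg⟩ := h K hKc
  have hsub : K ⊆ (fun b => b + (-g)) '' B := by
    intro k hk
    exact ⟨k + g, hAB (hg ⟨k, hk, rfl⟩), add_neg_cancel_right k g⟩
  exact hKpos (measure_mono_null hsub (hμ0 (-g)))
end
end

section
/- Let h : [0,1] → ℝ be continuous, strictly increasing and subadditive with h(0) = 0, and extend h to [−1,1] by h(−x) = −h(x) for x ∈ [0,1]. Then there exist a nonempty perfect set P ⊆ [0,1] and a non-decreasing continuous function g : [0,1] → ℝ such that for every p ∈ P, (g(x) − g(p))/h(x − p) → ∞ as x → p within [0,1] \ {p}. -/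
open MeasureTheory Set Filter Topology

noncomputable section

namespace FastIncr

structure Ctx where
  h : ℝ → ℝ
  a : ℕ → ℝ
  hcont : ContinuousOn h (Icc 0 1)
  hmono : StrictMonoOn h (Icc 0 1)
  h0 : h 0 = 0
  hsub : ∀ s t : ℝ, s ∈ Icc (0 : ℝ) 1 → t ∈ Icc (0 : ℝ) 1 → s + t ∈ Icc (0 : ℝ) 1 →
      h (s + t) ≤ h s + h t
  apos : ∀ n, 0 < a n
  aq : ∀ n, a (n + 1) ≤ a n / 4
  a0 : a 0 ≤ 1/4
  ahb : ∀ n, h (a n) ≤ (1/8)^n * h 1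

namespace Ctx

variable (c : Ctx)

lemma h1pos : 0 < c.h 1 := by
  have := c.hmono (by norm_num : (0:ℝ) ∈ Icc (0:ℝ) 1) (by norm_num : (1:ℝ) ∈ Icc (0:ℝ) 1)
    (by norm_num)
  rw [c.h0] at this; exact this

lemma hm {s t : ℝ} (hs : 0 ≤ s) (hst : s ≤ t) (ht : t ≤ 1) : c.h s ≤ c.h t := by
  rcases eq_or_lt_of_le hst with rfl | hlt
  · exact le_rfl
  · exact (c.hmono ⟨hs, hst.trans ht⟩ ⟨hs.trans hst, ht⟩ hlt).le

lemma hnn {t : ℝ} (h1 : 0 ≤ t) (h2 : t ≤ 1) : 0 ≤ c.h t := by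
  have := c.hm le_rfl h1 h2; rwa [c.h0] at this

lemma hpos {t : ℝ} (h1 : 0 < t) (h2 : t ≤ 1) : 0 < c.h t := by
  have := c.hmono (by norm_num : (0:ℝ) ∈ Icc (0:ℝ) 1) ⟨h1.le, h2⟩ h1
  rwa [c.h0] at this

lemma a_shift : ∀ n k, c.a (n + k) ≤ (1/4)^k * c.a n := by
  intro n k
  induction k with
  | zero => simp
  | succ k ih =>
    have := c.aq (n + k)
    calc c.a (n + (k+1)) = c.a ((n + k) + 1) := by ring_nf
      _ ≤ c.a (n + k) / 4 := c.aq _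
      _ ≤ ((1/4)^k * c.a n) / 4 := by linarith
      _ = (1/4)^(k+1) * c.a n := by ring

lemma a_anti {m n : ℕ} (hmn : m ≤ n) : c.a n ≤ c.a m := by
  obtain ⟨k, rfl⟩ := Nat.exists_eq_add_of_le hmn
  calc c.a (m + k) ≤ (1/4)^k * c.a m := c.a_shift m k
    _ ≤ 1 * c.a m := by
        apply mul_le_mul_of_nonneg_right _ (c.apos m).le
        exact pow_le_one₀ (by norm_num) (by norm_num)
    _ = c.a m := one_mul _

lemma a_le_q (n : ℕ) : c.a n ≤ 1/4 := (c.a_anti (Nat.zero_le n)).trans c.a0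

lemma a_le_one (n : ℕ) : c.a n ≤ 1 := (c.a_le_q n).trans (by norm_num)

lemma summable_a : Summable c.a := by
  have hb : ∀ n, c.a n ≤ (1/4:ℝ)^n * c.a 0 := by
    intro n; have := c.a_shift 0 n; simpa using this
  have hs : Summable (fun n : ℕ => (1/4:ℝ)^n * c.a 0) :=
    (summable_geometric_of_lt_one (by norm_num) (by norm_num)).mul_right _
  exact Summable.of_nonneg_of_le (fun n => (c.apos n).le) hb hs

def T (n : ℕ) : ℝ := ∑' i, c.a (i + n)

lemma summable_shift (n : ℕ) : Summable fun i => c.a (i + n) :=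
  (summable_nat_add_iff n).mpr c.summable_a

lemma T_eq (n : ℕ) : c.T n = c.a n + c.T (n + 1) := by
  have := Summable.sum_add_tsum_nat_add (f := fun i => c.a (i + n)) 1 (c.summable_shift n)
  simp only [Finset.range_one, Finset.sum_singleton, zero_add] at this
  rw [T, ← this, T]
  congr 1
  apply tsum_congr; intro i; congr 1; ring

lemma T_nonneg (n : ℕ) : 0 ≤ c.T n :=
  tsum_nonneg (fun i => (c.apos _).le)

lemma T_pos (n : ℕ) : 0 < c.T n := by
  rw [c.T_eq n]
  have := c.T_nonneg (n+1); have := c.apos n; linarith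

lemma T_le (n : ℕ) : c.T n ≤ (4/3) * c.a n := by
  have h1 : ∀ i, c.a (i + n) ≤ (1/4)^i * c.a n := by
    intro i; rw [Nat.add_comm]; exact c.a_shift n i
  have h2 : Summable fun i : ℕ => (1/4:ℝ)^i * c.a n :=
    (summable_geometric_of_lt_one (by norm_num) (by norm_num)).mul_right _
  calc c.T n ≤ ∑' i : ℕ, (1/4:ℝ)^i * c.a n :=
        Summable.tsum_le_tsum h1 (c.summable_shift n) h2
    _ = (∑' i : ℕ, (1/4:ℝ)^i) * c.a n := tsum_mul_right
    _ = (4/3) * c.a n := by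
        rw [tsum_geometric_of_lt_one (by norm_num) (by norm_num)]; norm_num

lemma T_succ_le (n : ℕ) : c.T (n + 1) ≤ c.a n / 3 := by
  have := c.T_le (n+1); have := c.aq n; have := c.apos (n+1); linarith

lemma T0_le : c.T 0 ≤ 1/3 := by
  have := c.T_le 0; have := c.a0; linarith

lemma T_lt_a (n : ℕ) : c.T (n + 1) < c.a n := by
  have := c.T_succ_le n; have := c.apos n; linarith


/-! ### The Cantor-type set -/

def cS (S : Finset ℕ) : ℝ := ∑ i ∈ S, c.a i

lemma cS_nonneg (S : Finset ℕ) : 0 ≤ c.cS S :=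
  Finset.sum_nonneg (fun i _ => (c.apos i).le)

def f (σ : ℕ → Bool) : ℝ := ∑' i, if σ i then c.a i else 0

def P : Set ℝ := Set.range c.f

lemma f_eq (σ : ℕ → Bool) : c.f σ = ∑' i, if σ i then c.a i else 0 := rfl

lemma summable_f (σ : ℕ → Bool) : Summable (fun i => if σ i then c.a i else 0) := by
  apply Summable.of_nonneg_of_le _ _ c.summable_a
  · intro i; by_cases hb : σ i <;> simp [hb, (c.apos i).le]
  · intro i; by_cases hb : σ i <;> simp [hb, (c.apos i).le]

lemma T0_eq : c.T 0 = ∑' i, c.a i := by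
  rw [T]; apply tsum_congr; intro i; congr 1

lemma f_nonneg (σ : ℕ → Bool) : 0 ≤ c.f σ := by
  apply tsum_nonneg; intro i; by_cases hb : σ i <;> simp [hb, (c.apos i).le]

lemma f_le (σ : ℕ → Bool) : c.f σ ≤ c.T 0 := by
  rw [c.T0_eq]
  apply Summable.tsum_le_tsum _ (c.summable_f σ) c.summable_a
  intro i; by_cases hb : σ i <;> simp [hb, (c.apos i).le]

lemma P_sub : c.P ⊆ Icc 0 (c.T 0) := by
  rintro y ⟨σ, rfl⟩; exact ⟨c.f_nonneg σ, c.f_le σ⟩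

lemma P_sub' : c.P ⊆ Icc 0 1 :=
  c.P_sub.trans (Icc_subset_Icc le_rfl (c.T0_le.trans (by norm_num)))

lemma P_nonempty : c.P.Nonempty := ⟨c.f (fun _ => false), ⟨_, rfl⟩⟩

lemma f_continuous : Continuous c.f := by
  apply continuous_tsum (u := c.a)
  · intro i
    exact Continuous.comp (continuous_of_discreteTopology
      (f := fun b : Bool => if b then c.a i else 0)) (continuous_apply i)
  · exact c.summable_a
  · intro i σ
    rw [Real.norm_eq_abs]
    by_cases hb : σ i <;> simp [hb, (c.apos i).le, abs_of_nonneg, le_refl]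

lemma P_closed : IsClosed c.P :=
  (isCompact_range c.f_continuous).isClosed

lemma f_update (σ : ℕ → Bool) (k : ℕ) (b : Bool) :
    c.f (Function.update σ k b) = c.f σ +
      ((if b then c.a k else 0) - (if σ k then c.a k else 0)) := by
  classical
  have h1 := Summable.tsum_eq_add_tsum_ite (c.summable_f σ) k
  have h2 := Summable.tsum_eq_add_tsum_ite (c.summable_f (Function.update σ k b)) k
  have h3 : (fun n => if n = k then 0 else if Function.update σ k b n then c.a n else 0)
      = (fun n => if n = k then 0 else if σ n then c.a n else 0) := by
    funext n
    by_cases hn : n = k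
    · simp [hn]
    · simp [hn, Function.update_of_ne hn]
  rw [f, h2, h3, Function.update_self]
  rw [f, h1] at *
  ring

lemma P_perfect : Perfect c.P := by
  refine ⟨c.P_closed, preperfect_iff_nhds.mpr ?_⟩
  rintro x ⟨σ, rfl⟩ U hU
  obtain ⟨ε, hε, hball⟩ := Metric.mem_nhds_iff.mp hU
  obtain ⟨k, hk⟩ : ∃ k : ℕ, (1/4:ℝ)^k < ε := exists_pow_lt_of_lt_one hε (by norm_num)
  have hak : c.a k < ε := by
    have h1 : c.a k ≤ (1/4:ℝ)^k * c.a 0 := by simpa using c.a_shift 0 k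
    nlinarith [c.apos 0, c.a0, pow_pos (by norm_num : (0:ℝ) < 1/4) k, c.apos k]
  refine ⟨c.f (Function.update σ k (!σ k)), ⟨?_, ⟨_, rfl⟩⟩, ?_⟩
  · apply hball
    rw [Metric.mem_ball, Real.dist_eq, c.f_update σ k (!σ k)]
    cases hb : σ k <;>
      simp [hb, abs_of_nonneg (c.apos k).le, abs_of_nonpos, (c.apos k).le, hak] <;>
      rw [abs_of_nonpos (by linarith [c.apos k])] <;> simpa using hak
  · rw [c.f_update σ k (!σ k)]
    cases hb : σ k <;> simp [hb] <;> intro hcon <;>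
      [skip; exact absurd hcon.symm (ne_of_lt (c.apos k))] <;>
      exact absurd hcon (ne_of_gt (c.apos k))

lemma P_cover (n : ℕ) : ∀ y ∈ c.P, ∃ S ∈ (Finset.range n).powerset,
    y ∈ Icc (c.cS S) (c.cS S + c.T n) := by
  classical
  rintro y ⟨σ, rfl⟩
  set S := (Finset.range n).filter (fun i => σ i = true) with hS
  have hsub : S ⊆ Finset.range n := Finset.filter_subset _ _
  have hcs : c.cS S = ∑ i ∈ Finset.range n, (if σ i = true then c.a i else 0) := by
    rw [hS, cS]; exact Finset.sum_filter _ _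
  have hsplit := Summable.sum_add_tsum_nat_add (f := fun i => if σ i then c.a i else 0) n
    (c.summable_f σ)
  have hfσ : (∑' i, if σ i then c.a i else 0) = c.f σ := rfl
  rw [hfσ] at hsplit
  have htail0 : 0 ≤ ∑' i : ℕ, (if σ (i + n) then c.a (i + n) else 0) := by
    apply tsum_nonneg; intro i; by_cases hb : σ (i+n) <;> simp [hb, (c.apos _).le]
  have htailT : ∑' i : ℕ, (if σ (i + n) then c.a (i + n) else 0) ≤ c.T n := by
    rw [T]
    apply Summable.tsum_le_tsum _ _ (c.summable_shift n)
    · intro i; by_cases hb : σ (i+n) <;> simp [hb, (c.apos _).le]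
    · exact ((summable_nat_add_iff (f := fun i => if σ i then c.a i else 0) n).mpr (c.summable_f σ))
  refine ⟨S, Finset.mem_powerset.mpr hsub, ?_, ?_⟩
  · rw [hcs]; linarith
  · rw [hcs]; linarith

lemma P_vol : volume c.P = 0 := by
  classical
  have key : ∀ n : ℕ, volume c.P ≤ ENNReal.ofReal ((1/3) * (1/2)^n) := by
    intro n
    have hsub : c.P ⊆ ⋃ S ∈ (Finset.range n).powerset,
        Icc (c.cS S) (c.cS S + c.T n) := by
      intro y hy
      obtain ⟨S, hS, hmem⟩ := c.P_cover n y hy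
      exact Set.mem_biUnion hS hmem
    calc volume c.P ≤ volume (⋃ S ∈ (Finset.range n).powerset,
          Icc (c.cS S) (c.cS S + c.T n)) := measure_mono hsub
      _ ≤ ∑ S ∈ (Finset.range n).powerset, volume (Icc (c.cS S) (c.cS S + c.T n)) :=
          measure_biUnion_finset_le _ _
      _ = ∑ _S ∈ (Finset.range n).powerset, ENNReal.ofReal (c.T n) := by
          apply Finset.sum_congr rfl; intro S _
          rw [Real.volume_Icc]; congr 1; ring
      _ = (2^n : ℕ) * ENNReal.ofReal (c.T n) := by
          rw [Finset.sum_const, Finset.card_powerset, Finset.card_range]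
          simp [nsmul_eq_mul]
      _ ≤ ENNReal.ofReal ((1/3) * (1/2)^n) := by
          rw [← ENNReal.ofReal_natCast, ← ENNReal.ofReal_mul (by positivity)]
          apply ENNReal.ofReal_le_ofReal
          have h1 : c.T n ≤ (4/3) * c.a n := c.T_le n
          have h2 : c.a n ≤ (1/4)^n * c.a 0 := by simpa using c.a_shift 0 n
          have h3 : (2:ℝ)^n * ((4/3) * ((1/4)^n * (1/4))) = (1/3) * (1/2)^n := by
            rw [show ((1:ℝ)/2) = 2 * (1/4) by norm_num, mul_pow]
            ring
          have h4 : ((2^n : ℕ) : ℝ) = (2:ℝ)^n := by push_cast; ring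
          rw [h4]
          nlinarith [pow_pos (by norm_num : (0:ℝ) < 2) n, c.a0, c.apos 0,
            pow_pos (by norm_num : (0:ℝ) < 1/4) n, c.T_nonneg n,
            pow_pos (by norm_num : (0:ℝ) < 1/2) n]
  have htend : Tendsto (fun n : ℕ => ENNReal.ofReal ((1/3) * (1/2)^n)) atTop (𝓝 0) := by
    rw [show (0 : ENNReal) = ENNReal.ofReal 0 by simp]
    apply ENNReal.tendsto_ofReal
    have := tendsto_pow_atTop_nhds_zero_of_lt_one (by norm_num : (0:ℝ) ≤ 1/2)
      (by norm_num : (1/2:ℝ) < 1)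
    simpa using this.const_mul (1/3 : ℝ)
  exact le_antisymm (ge_of_tendsto htend (Eventually.of_forall key)) (by simp)


/-! ### Gap structure -/

lemma partial_le_T (j m : ℕ) : ∑ k ∈ Finset.range m, c.a (k + j) ≤ c.T j := by
  apply Summable.sum_le_tsum (Finset.range m) (fun i _ => (c.apos _).le) (c.summable_shift j)

lemma sum_Ico_le_T (u v : ℕ) : ∑ i ∈ Finset.Ico u v, c.a i ≤ c.T u := by
  rw [Finset.sum_Ico_eq_sum_range]
  have he : ∀ k, c.a (u + k) = c.a (k + u) := fun k => by rw [Nat.add_comm]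
  calc ∑ k ∈ Finset.range (v - u), c.a (u + k)
      = ∑ k ∈ Finset.range (v - u), c.a (k + u) := by
        apply Finset.sum_congr rfl; intro k _; exact he k
    _ ≤ c.T u := c.partial_le_T u (v - u)

lemma cS_dichotomy {n : ℕ} {S0 S : Finset ℕ} (h0 : S0 ⊆ Finset.range n)
    (hS : S ⊆ Finset.range (n + 1)) :
    c.cS S ≤ c.cS S0 ∨ c.cS S0 + c.a n ≤ c.cS S := by
  classical
  set D := (S \ S0) ∪ (S0 \ S) with hD
  by_cases hne : D = ∅
  · left
    rcases Finset.union_eq_empty.mp hne with ⟨h1, _⟩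
    exact Finset.sum_le_sum_of_subset_of_nonneg
      (Finset.sdiff_eq_empty_iff_subset.mp h1) (fun i _ _ => (c.apos i).le)
  · have hne' : D.Nonempty := Finset.nonempty_of_ne_empty hne
    set j := D.min' hne' with hj
    have hjD : j ∈ D := Finset.min'_mem D hne'
    have hmin : ∀ i ∈ D, j ≤ i := fun i hi => Finset.min'_le D i hi
    have e1 : ∑ i ∈ S ∩ S0, c.a i + ∑ i ∈ S \ S0, c.a i = c.cS S :=
      Finset.sum_inter_add_sum_sdiff S S0 c.a
    have e2 : ∑ i ∈ S0 ∩ S, c.a i + ∑ i ∈ S0 \ S, c.a i = c.cS S0 :=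
      Finset.sum_inter_add_sum_sdiff S0 S c.a
    have e3 : S ∩ S0 = S0 ∩ S := Finset.inter_comm S S0
    rw [e3] at e1
    rcases Finset.mem_union.mp hjD with hjS | hjS0
    · right
      have hjS' : j ∈ S := (Finset.mem_sdiff.mp hjS).1
      have hjnS0 : j ∉ S0 := (Finset.mem_sdiff.mp hjS).2
      have hj_le : c.a j ≤ ∑ i ∈ S \ S0, c.a i :=
        Finset.single_le_sum (fun i _ => (c.apos i).le) hjS
      have hsub : S0 \ S ⊆ Finset.Ico (j + 1) n := by
        intro i hi
        have hiD : i ∈ D := Finset.mem_union_right _ hi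
        have h1 : j ≤ i := hmin i hiD
        have h2 : i ≠ j := by rintro rfl; exact hjnS0 (Finset.mem_sdiff.mp hi).1
        have h3 : i < n := Finset.mem_range.mp (h0 (Finset.mem_sdiff.mp hi).1)
        exact Finset.mem_Ico.mpr ⟨by omega, h3⟩
      have hS0S : ∑ i ∈ S0 \ S, c.a i ≤ c.T (j + 1) :=
        le_trans (Finset.sum_le_sum_of_subset_of_nonneg hsub
          (fun i _ _ => (c.apos i).le)) (c.sum_Ico_le_T (j+1) n)
      have hjn : j < n + 1 := Finset.mem_range.mp (hS hjS')
      rcases Nat.lt_or_ge j n with hlt | hge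
      · have h4 : c.a n ≤ c.a j / 4 := le_trans (c.a_anti hlt) (c.aq j)
        have h5 : c.T (j + 1) ≤ c.a j / 3 := c.T_succ_le j
        have := c.apos j
        linarith
      · have hjn' : j = n := by omega
        subst hjn'
        have hS0S0 : S0 \ S = ∅ := by
          apply Finset.eq_empty_of_forall_notMem
          intro i hi
          have := hsub hi
          rw [Finset.mem_Ico] at this
          omega
        rw [hS0S0, Finset.sum_empty] at e2
        linarith
    · left
      have hjS0' : j ∈ S0 := (Finset.mem_sdiff.mp hjS0).1
      have hjnS : j ∉ S := (Finset.mem_sdiff.mp hjS0).2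
      have hj_le : c.a j ≤ ∑ i ∈ S0 \ S, c.a i :=
        Finset.single_le_sum (fun i _ => (c.apos i).le) hjS0
      have hsub : S \ S0 ⊆ Finset.Ico (j + 1) (n + 1) := by
        intro i hi
        have hiD : i ∈ D := Finset.mem_union_left _ hi
        have h1 : j ≤ i := hmin i hiD
        have h2 : i ≠ j := by rintro rfl; exact hjnS (Finset.mem_sdiff.mp hi).1
        have h3 : i < n + 1 := Finset.mem_range.mp (hS (Finset.mem_sdiff.mp hi).1)
        exact Finset.mem_Ico.mpr ⟨by omega, h3⟩
      have hSS0 : ∑ i ∈ S \ S0, c.a i ≤ c.T (j + 1) :=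
        le_trans (Finset.sum_le_sum_of_subset_of_nonneg hsub
          (fun i _ _ => (c.apos i).le)) (c.sum_Ico_le_T (j+1) (n+1))
      have h5 : c.T (j + 1) ≤ c.a j / 3 := c.T_succ_le j
      have := c.apos j
      linarith

def gA : ℕ × Finset ℕ → ℝ := fun i =>
  if i.2 ⊆ Finset.range i.1 then c.cS i.2 + c.T (i.1 + 1) else c.T 0

def gB : ℕ × Finset ℕ → ℝ := fun i =>
  if i.2 ⊆ Finset.range i.1 then c.cS i.2 + c.a i.1
  else if i = (0, ({0} : Finset ℕ)) then 2 else c.T 0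

lemma gap_nonneg (i : ℕ × Finset ℕ) : 0 ≤ c.gB i - c.gA i := by
  rcases i with ⟨n, S⟩
  by_cases hv : S ⊆ Finset.range n
  · simp only [gA, gB, if_pos hv]
    have := c.T_lt_a n
    linarith
  · by_cases hsp : ((n, S) : ℕ × Finset ℕ) = (0, ({0} : Finset ℕ))
    · simp only [gA, gB, if_neg hv, if_pos hsp]
      have := c.T0_le; linarith
    · simp only [gA, gB, if_neg hv, if_neg hsp]; linarith

lemma gap_disjoint (i : ℕ × Finset ℕ) : ∀ y ∈ c.P, y ∉ Ioo (c.gA i) (c.gB i) := by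
  rcases i with ⟨n, S⟩
  intro y hyP hy
  rcases hy with ⟨hy1, hy2⟩
  by_cases hv : S ⊆ Finset.range n
  · simp only [gA, gB, if_pos hv] at hy1 hy2
    obtain ⟨S', hS', hmem⟩ := c.P_cover (n+1) y hyP
    rcases c.cS_dichotomy hv (Finset.mem_powerset.mp hS') with hle | hge
    · rcases hmem with ⟨_, hm2⟩; linarith
    · rcases hmem with ⟨hm1, _⟩; linarith
  · by_cases hsp : ((n, S) : ℕ × Finset ℕ) = (0, ({0} : Finset ℕ))
    · have hgA : c.gA (n, S) = c.T 0 := by simp [gA, hv]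
      rw [hgA] at hy1
      have := (c.P_sub hyP).2
      linarith
    · have hgA : c.gA (n, S) = c.T 0 := by simp [gA, hv]
      have hgB : c.gB (n, S) = c.T 0 := by simp [gB, hv, hsp]
      rw [hgA] at hy1; rw [hgB] at hy2
      linarith

/-! ### Greedy covering -/

def greedy (y : ℝ) : ℕ → ℝ
  | 0 => 0
  | n + 1 => greedy y n + if c.a n ≤ y - greedy y n then c.a n else 0

lemma greedy_zero (y : ℝ) : c.greedy y 0 = 0 := rfl

lemma greedy_succ (y : ℝ) (n : ℕ) : c.greedy y (n + 1) =
    c.greedy y n + (if c.a n ≤ y - c.greedy y n then c.a n else 0) := rfl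

lemma greedy_eq_sum (y : ℝ) (n : ℕ) :
    c.greedy y n = ∑ i ∈ Finset.range n, (if c.a i ≤ y - c.greedy y i then c.a i else 0) := by
  induction n with
  | zero => simp [c.greedy_zero]
  | succ n ih => rw [Finset.sum_range_succ, ← ih, c.greedy_succ]

lemma greedy_cover {y : ℝ} (h0y : 0 ≤ y) (hyT : y ≤ c.T 0) (hyP : y ∉ c.P) :
    ∃ n : ℕ, ∃ S : Finset ℕ, S ⊆ Finset.range n ∧
      c.cS S + c.T (n + 1) < y ∧ y < c.cS S + c.a n := by
  classical
  by_contra hcon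
  push_neg at hcon
  have hinv : ∀ n, 0 ≤ y - c.greedy y n ∧ y - c.greedy y n ≤ c.T n := by
    intro n
    induction n with
    | zero => rw [c.greedy_zero]; simpa using ⟨h0y, hyT⟩
    | succ n ih =>
      rcases ih with ⟨ih1, ih2⟩
      by_cases hc : c.a n ≤ y - c.greedy y n
      · rw [c.greedy_succ, if_pos hc]
        constructor
        · linarith
        · have := c.T_eq n; linarith
      · rw [c.greedy_succ, if_neg hc]
        push_neg at hc
        constructor
        · linarith
        · by_contra hbig
          push_neg at hbig
          set S : Finset ℕ := (Finset.range n).filter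
            (fun i => c.a i ≤ y - c.greedy y i) with hSdef
          have hcs : c.cS S = c.greedy y n := by
            rw [cS, hSdef, Finset.sum_filter, ← c.greedy_eq_sum]
          have := hcon n S (Finset.filter_subset _ _)
          rw [hcs] at this
          have h2 := this (by linarith)
          linarith
  -- y is the limit of the greedy sums, hence in P
  set σ : ℕ → Bool := fun i => decide (c.a i ≤ y - c.greedy y i) with hσ
  have hgs : ∀ n, c.greedy y n = ∑ i ∈ Finset.range n, (if σ i then c.a i else 0) := by
    intro n
    rw [c.greedy_eq_sum]
    apply Finset.sum_congr rfl
    intro i _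
    simp only [hσ, decide_eq_true_eq]
  have htend1 : Tendsto (fun n => c.greedy y n) atTop (𝓝 (c.f σ)) := by
    have := (c.summable_f σ).hasSum.tendsto_sum_nat
    convert this using 1
    funext n
    exact hgs n
    rfl
  have hTtend : Tendsto (fun n => c.T n) atTop (𝓝 0) := by
    have hgeo : Tendsto (fun n : ℕ => (4/3) * ((1/4:ℝ)^n * c.a 0)) atTop (𝓝 0) := by
      have := tendsto_pow_atTop_nhds_zero_of_lt_one
        (by norm_num : (0:ℝ) ≤ 1/4) (by norm_num : (1/4:ℝ) < 1)
      simpa using (this.mul_const (c.a 0)).const_mul (4/3 : ℝ)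
    apply squeeze_zero (fun n => (c.T_nonneg n))
      (fun n => ?_) hgeo
    calc c.T n ≤ (4/3) * c.a n := c.T_le n
      _ ≤ (4/3) * ((1/4)^n * c.a 0) := by
          have := c.a_shift 0 n
          simp only [Nat.zero_add] at this
          nlinarith [c.apos n]
  have htend2 : Tendsto (fun n => c.greedy y n) atTop (𝓝 y) := by
    have hlow : ∀ n, y - c.T n ≤ c.greedy y n := fun n => by linarith [(hinv n).2]
    have hhigh : ∀ n, c.greedy y n ≤ y := fun n => by linarith [(hinv n).1]
    have : Tendsto (fun n => y - c.T n) atTop (𝓝 y) := by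
      simpa using (tendsto_const_nhds (x := y) (f := atTop)).sub hTtend
    exact tendsto_of_tendsto_of_tendsto_of_le_of_le this tendsto_const_nhds hlow hhigh
  exact hyP (tendsto_nhds_unique htend2 htend1 ▸ ⟨σ, rfl⟩)

lemma gap_cover {y : ℝ} (h0y : 0 ≤ y) (hy1 : y ≤ 1) (hyP : y ∉ c.P) :
    ∃ i : ℕ × Finset ℕ, y ∈ Ioo (c.gA i) (c.gB i) := by
  by_cases hT : y ≤ c.T 0
  · obtain ⟨n, S, hSn, h1, h2⟩ := c.greedy_cover h0y hT hyP
    exact ⟨(n, S), by simp only [gA, gB, if_pos hSn]; exact ⟨h1, h2⟩⟩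
  · refine ⟨(0, ({0} : Finset ℕ)), ?_⟩
    have hv : ¬(({0} : Finset ℕ) ⊆ Finset.range 0) := by simp
    have hgA : c.gA (0, ({0} : Finset ℕ)) = c.T 0 := by simp [gA]
    have hgB : c.gB (0, ({0} : Finset ℕ)) = 2 := by simp [gB]
    rw [Set.mem_Ioo, hgA, hgB]
    push_neg at hT
    exact ⟨hT, by linarith⟩


/-! ### The layer functions -/

def cl (p t : ℝ) : ℝ := min (max t 0) p

lemma cl_nonneg {p : ℝ} (hp : 0 ≤ p) (t : ℝ) : 0 ≤ cl p t :=
  le_min (le_max_right t 0) hp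

lemma cl_le {p t : ℝ} : cl p t ≤ p := min_le_right _ _

lemma cl_le_one {p : ℝ} (hp1 : p ≤ 1) (t : ℝ) : cl p t ≤ 1 := cl_le.trans hp1

lemma cl_mono (p : ℝ) : Monotone (cl p) := fun s t hst =>
  min_le_min (max_le_max hst le_rfl) le_rfl

lemma cl_of_nonpos {p t : ℝ} (hp : 0 ≤ p) (ht : t ≤ 0) : cl p t = 0 := by
  rw [cl, max_eq_right ht, min_eq_left hp]

lemma cl_of_ge {p t : ℝ} (hp : 0 ≤ p) (ht : p ≤ t) : cl p t = p := by
  rw [cl, max_eq_left (hp.trans ht), min_eq_right ht]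

def r (N : ℕ) : ℝ := c.a (N + 1)

def rho (N : ℕ) (i : ℕ × Finset ℕ) : ℝ := min (c.gB i - c.gA i) (c.r N)

lemma rho_nonneg (N : ℕ) (i : ℕ × Finset ℕ) : 0 ≤ c.rho N i :=
  le_min (c.gap_nonneg i) (c.apos _).le

lemma rho_le_r (N : ℕ) (i : ℕ × Finset ℕ) : c.rho N i ≤ c.a (N + 1) := min_le_right _ _

lemma rho_le_one (N : ℕ) (i : ℕ × Finset ℕ) : c.rho N i ≤ 1 :=
  (c.rho_le_r N i).trans (c.a_le_one _)

lemma rho_le_gap (N : ℕ) (i : ℕ × Finset ℕ) : c.rho N i ≤ c.gB i - c.gA i := min_le_left _ _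

def psi (N : ℕ) (i : ℕ × Finset ℕ) (y : ℝ) : ℝ :=
  c.h (cl (c.rho N i) (y - c.gA i)) + c.h (c.rho N i) - c.h (cl (c.rho N i) (c.gB i - y))

lemma h_cl_nonneg (N : ℕ) (i : ℕ × Finset ℕ) (t : ℝ) : 0 ≤ c.h (cl (c.rho N i) t) :=
  c.hnn (cl_nonneg (c.rho_nonneg N i) t) (cl_le_one (c.rho_le_one N i) t)

lemma h_cl_le (N : ℕ) (i : ℕ × Finset ℕ) (t : ℝ) : c.h (cl (c.rho N i) t) ≤ c.h (c.rho N i) :=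
  c.hm (cl_nonneg (c.rho_nonneg N i) t) cl_le (c.rho_le_one N i)

lemma h_rho_nonneg (N : ℕ) (i : ℕ × Finset ℕ) : 0 ≤ c.h (c.rho N i) :=
  c.hnn (c.rho_nonneg N i) (c.rho_le_one N i)

lemma psi_nonneg (N : ℕ) (i : ℕ × Finset ℕ) (y : ℝ) : 0 ≤ c.psi N i y := by
  have h1 := c.h_cl_nonneg N i (y - c.gA i)
  have h2 := c.h_cl_le N i (c.gB i - y)
  rw [psi]; linarith

lemma psi_le (N : ℕ) (i : ℕ × Finset ℕ) (y : ℝ) : c.psi N i y ≤ 2 * c.h (c.rho N i) := by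
  have h1 := c.h_cl_le N i (y - c.gA i)
  have h2 := c.h_cl_nonneg N i (c.gB i - y)
  rw [psi]; linarith

lemma psi_mono (N : ℕ) (i : ℕ × Finset ℕ) : Monotone (c.psi N i) := by
  intro y y' hyy
  have h1 : c.h (cl (c.rho N i) (y - c.gA i)) ≤ c.h (cl (c.rho N i) (y' - c.gA i)) :=
    c.hm (cl_nonneg (c.rho_nonneg N i) _)
      (cl_mono _ (by linarith)) (cl_le_one (c.rho_le_one N i) _)
  have h2 : c.h (cl (c.rho N i) (c.gB i - y')) ≤ c.h (cl (c.rho N i) (c.gB i - y)) :=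
    c.hm (cl_nonneg (c.rho_nonneg N i) _)
      (cl_mono _ (by linarith)) (cl_le_one (c.rho_le_one N i) _)
  rw [psi, psi]; linarith

lemma psi_left (N : ℕ) (i : ℕ × Finset ℕ) {y : ℝ} (hy : y ≤ c.gA i) : c.psi N i y = 0 := by
  have h1 : cl (c.rho N i) (y - c.gA i) = 0 :=
    cl_of_nonpos (c.rho_nonneg N i) (by linarith)
  have h2 : cl (c.rho N i) (c.gB i - y) = c.rho N i :=
    cl_of_ge (c.rho_nonneg N i) (by
      have := c.rho_le_gap N i; linarith)
  rw [psi, h1, h2, c.h0]; ring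

lemma psi_right (N : ℕ) (i : ℕ × Finset ℕ) {y : ℝ} (hy : c.gB i ≤ y) :
    c.psi N i y = 2 * c.h (c.rho N i) := by
  have h1 : cl (c.rho N i) (y - c.gA i) = c.rho N i :=
    cl_of_ge (c.rho_nonneg N i) (by
      have := c.rho_le_gap N i; linarith)
  have h2 : cl (c.rho N i) (c.gB i - y) = 0 :=
    cl_of_nonpos (c.rho_nonneg N i) (by linarith)
  rw [psi, h1, h2, c.h0]; ring

/-- Key per-gap increment estimate. -/
lemma psi_incr (N : ℕ) (i : ℕ × Finset ℕ) {w₁ w₂ : ℝ} (hw : w₁ ≤ w₂)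
    (hside : w₁ ∉ Ioo (c.gA i) (c.gB i) ∨ w₂ ∉ Ioo (c.gA i) (c.gB i)) :
    c.h (cl (c.rho N i) (min w₂ (c.gB i) - max w₁ (c.gA i))) ≤
      c.psi N i w₂ - c.psi N i w₁ := by
  set A := c.gA i with hA
  set B := c.gB i with hB
  set p := c.rho N i with hp
  have hAB : A ≤ B := by have := c.gap_nonneg i; linarith
  have hpge : 0 ≤ p := c.rho_nonneg N i
  have hmono0 := c.psi_mono N i hw
  by_cases hc1 : w₂ ≤ A
  · have harg : min w₂ B - max w₁ A ≤ 0 := by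
      have h1 : min w₂ B ≤ w₂ := min_le_left _ _
      have h2 : A ≤ max w₁ A := le_max_right _ _
      linarith
    rw [cl_of_nonpos hpge harg, c.h0]
    linarith
  by_cases hc2 : B ≤ w₁
  · have harg : min w₂ B - max w₁ A ≤ 0 := by
      have h1 : min w₂ B ≤ B := min_le_right _ _
      have h2 : w₁ ≤ max w₁ A := le_max_left _ _
      linarith
    rw [cl_of_nonpos hpge harg, c.h0]
    linarith
  push_neg at hc1 hc2
  by_cases hc3 : w₁ ≤ A
  · have hmax : max w₁ A = A := max_eq_right hc3
    by_cases hc4 : B ≤ w₂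
    · have hmin : min w₂ B = B := min_eq_right hc4
      rw [hmax, hmin, cl_of_ge hpge (c.rho_le_gap N i)]
      rw [c.psi_right N i hc4, c.psi_left N i hc3]
      have := c.h_rho_nonneg N i
      linarith
    · push_neg at hc4
      have hmin : min w₂ B = w₂ := min_eq_left hc4.le
      rw [hmax, hmin]
      rw [c.psi_left N i hc3, psi]
      have h2 := c.h_cl_le N i (B - w₂)
      linarith
  · push_neg at hc3
    have hw1in : w₁ ∈ Ioo A B := ⟨hc3, hc2⟩
    have hw2out : w₂ ∉ Ioo A B := by
      rcases hside with h | h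
      · exact absurd hw1in h
      · exact h
    have hc4 : B ≤ w₂ := by
      rcases lt_or_ge w₂ B with hlt | hge
      · exact absurd ⟨lt_of_lt_of_le hc3 hw, hlt⟩ hw2out
      · exact hge
    have hmin : min w₂ B = B := min_eq_right hc4
    have hmax : max w₁ A = w₁ := max_eq_left hc3.le
    rw [hmin, hmax]
    rw [c.psi_right N i hc4, psi]
    have h1 := c.h_cl_le N i (w₁ - A)
    linarith

/-! ### Summability -/

def wt : ℕ × Finset ℕ → ℝ := fun i =>
  if i.2 ⊆ Finset.range i.1 then 2 * c.h 1 * (1/4)^i.1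
  else if i = (0, ({0} : Finset ℕ)) then 2 * c.h 1 else 0

lemma wt_nonneg (i : ℕ × Finset ℕ) : 0 ≤ c.wt i := by
  rw [wt]
  have := c.h1pos
  split_ifs <;> positivity

lemma pow_eighth_le (n N : ℕ) : ((1:ℝ)/8)^(max n (N + 1)) ≤ (1/4)^n * (1/2)^(N + 1) := by
  have hexp : 2 * n + (N + 1) ≤ 3 * max n (N + 1) := by
    rcases max_cases n (N + 1) with ⟨he, h1⟩ | ⟨he, h1⟩ <;> omega
  have h1 : ((1:ℝ)/8)^(max n (N+1)) = ((1:ℝ)/2)^(3 * max n (N+1)) := by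
    rw [pow_mul]; norm_num
  have h2 : ((1:ℝ)/2)^(3 * max n (N+1)) ≤ ((1:ℝ)/2)^(2 * n + (N + 1)) :=
    pow_le_pow_of_le_one (by norm_num) (by norm_num) hexp
  have h3 : ((1:ℝ)/2)^(2 * n + (N + 1)) = (1/4)^n * (1/2)^(N+1) := by
    rw [pow_add, pow_mul]; norm_num
  rw [h1, ← h3]; exact h2

lemma h_rho_le_wt (N : ℕ) (i : ℕ × Finset ℕ) :
    2 * c.h (c.rho N i) ≤ (1/2)^(N + 1) * c.wt i := by
  rcases i with ⟨n, S⟩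
  by_cases hv : S ⊆ Finset.range n
  · have hgap : c.gB (n, S) - c.gA (n, S) ≤ c.a n := by
      simp only [gA, gB, if_pos hv]
      have := c.T_nonneg (n+1); linarith
    have hrle : c.rho N (n, S) ≤ c.a (max n (N + 1)) := by
      rcases max_cases n (N+1) with ⟨he, h1⟩ | ⟨he, h1⟩
      · rw [he]; exact le_trans (c.rho_le_gap N _) hgap
      · rw [he]; exact c.rho_le_r N _
    have h1 : c.h (c.rho N (n, S)) ≤ c.h (c.a (max n (N + 1))) :=
      c.hm (c.rho_nonneg N _) hrle (c.a_le_one _)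
    have h2 : c.h (c.a (max n (N + 1))) ≤ (1/8)^(max n (N+1)) * c.h 1 := c.ahb _
    have h3 := pow_eighth_le n N
    have hwt : c.wt (n, S) = 2 * c.h 1 * (1/4)^n := by rw [wt, if_pos hv]
    rw [hwt]
    have hh1 := c.h1pos
    nlinarith [pow_pos (show (0:ℝ) < 1/2 by norm_num) (N+1),
      pow_pos (show (0:ℝ) < 1/4 by norm_num) n]
  · by_cases hsp : ((n, S) : ℕ × Finset ℕ) = (0, ({0} : Finset ℕ))
    · have hwt : c.wt (n, S) = 2 * c.h 1 := by rw [wt, if_neg hv, if_pos hsp]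
      have h1 : c.h (c.rho N (n, S)) ≤ c.h (c.a (N + 1)) :=
        c.hm (c.rho_nonneg N _) (c.rho_le_r N _) (c.a_le_one _)
      have h2 : c.h (c.a (N + 1)) ≤ (1/8)^(N+1) * c.h 1 := c.ahb _
      have h3 : ((1:ℝ)/8)^(N+1) ≤ (1/2)^(N+1) :=
        pow_le_pow_left₀ (by norm_num) (by norm_num) _
      have hh1 := c.h1pos
      rw [hwt]
      nlinarith [pow_pos (show (0:ℝ) < 1/8 by norm_num) (N+1),
        pow_pos (show (0:ℝ) < 1/2 by norm_num) (N+1)]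
    · have hwt : c.wt (n, S) = 0 := by rw [wt, if_neg hv, if_neg hsp]
      have hgap : c.gB (n, S) - c.gA (n, S) = 0 := by
        simp only [gA, gB, if_neg hv, if_neg hsp]; ring
      have hrho : c.rho N (n, S) = 0 := by
        rw [rho, hgap]
        exact min_eq_left (c.apos _).le
      rw [hwt, hrho, c.h0]
      norm_num

lemma psi_le_bnd (N : ℕ) (i : ℕ × Finset ℕ) (y : ℝ) :
    c.psi N i y ≤ (1/2)^(N + 1) * c.wt i :=
  le_trans (c.psi_le N i y) (c.h_rho_le_wt N i)

lemma wt_summable : Summable c.wt := by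
  classical
  have hsplit : c.wt = (fun i : ℕ × Finset ℕ =>
      if i.2 ⊆ Finset.range i.1 then 2 * c.h 1 * (1/4)^i.1 else 0) + (fun i =>
      if i = (0, ({0} : Finset ℕ)) then 2 * c.h 1 else 0) := by
    funext i
    rcases i with ⟨n, S⟩
    by_cases hv : S ⊆ Finset.range n
    · have hsp : ((n, S) : ℕ × Finset ℕ) ≠ (0, ({0} : Finset ℕ)) := by
        rintro heq
        rw [Prod.ext_iff] at heq
        rcases heq with ⟨h1, h2⟩
        simp only at h1 h2
        subst h1; subst h2
        simpa using hv
      simp [wt, hv, hsp]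
    · simp [wt, hv]
  rw [hsplit]
  apply Summable.add
  · rw [summable_prod_of_nonneg]
    constructor
    · intro n
      apply summable_of_ne_finset_zero (s := (Finset.range n).powerset)
      intro S hS
      rw [if_neg]
      intro hsub
      exact hS (Finset.mem_powerset.mpr hsub)
    · apply Summable.of_nonneg_of_le
        (fun n => tsum_nonneg (fun S => by
          by_cases hS : S ⊆ Finset.range n
          · rw [if_pos hS]; have := c.h1pos; positivity
          · rw [if_neg hS]))
        (fun n => ?_)
        (Summable.mul_left (2 * c.h 1) (summable_geometric_of_lt_one
          (by norm_num : (0:ℝ) ≤ 1/2) (by norm_num)))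
      have : ∑' S : Finset ℕ, (if S ⊆ Finset.range n then 2 * c.h 1 * (1/4)^n else 0)
          = ∑ S ∈ (Finset.range n).powerset, (if S ⊆ Finset.range n
              then 2 * c.h 1 * (1/4)^n else 0) := by
        apply tsum_eq_sum
        intro S hS
        rw [if_neg]
        intro hsub
        exact hS (Finset.mem_powerset.mpr hsub)
      rw [this]
      have heq : ∑ S ∈ (Finset.range n).powerset, (if S ⊆ Finset.range n
          then 2 * c.h 1 * (1/4)^n else 0) = 2^n * (2 * c.h 1 * (1/4)^n) := by
        rw [Finset.sum_congr rfl (fun S hS => if_pos (Finset.mem_powerset.mp hS)),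
          Finset.sum_const, Finset.card_powerset, Finset.card_range, nsmul_eq_mul]
        push_cast
        ring
      rw [heq]
      have hh1 := c.h1pos
      have hps : (2:ℝ)^n * (1/4)^n = (1/2)^n := by
        rw [← mul_pow]; norm_num
      nlinarith [pow_pos (show (0:ℝ) < 1/2 by norm_num) n]
    · intro i
      dsimp only [Pi.zero_apply]
      by_cases hv2 : i.2 ⊆ Finset.range i.1
      · rw [if_pos hv2]; have := c.h1pos; positivity
      · rw [if_neg hv2]
  · apply summable_of_ne_finset_zero (s := {(0, ({0} : Finset ℕ))})
    intro i hi
    rw [if_neg]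
    simpa using hi

lemma bnd_summable (N : ℕ) : Summable (fun i => (1/2:ℝ)^(N + 1) * c.wt i) :=
  c.wt_summable.mul_left _

lemma psi_summable (N : ℕ) (y : ℝ) : Summable (fun i => c.psi N i y) :=
  Summable.of_nonneg_of_le (fun i => c.psi_nonneg N i y)
    (fun i => c.psi_le_bnd N i y) (c.bnd_summable N)

def Wt : ℝ := ∑' i, c.wt i

lemma Wt_nonneg : 0 ≤ c.Wt := tsum_nonneg c.wt_nonneg

def u (N : ℕ) (y : ℝ) : ℝ := ∑' i, c.psi N i y

lemma u_nonneg (N : ℕ) (y : ℝ) : 0 ≤ c.u N y :=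
  tsum_nonneg (fun i => c.psi_nonneg N i y)

lemma u_le (N : ℕ) (y : ℝ) : c.u N y ≤ (1/2)^(N + 1) * c.Wt := by
  rw [u, Wt, ← tsum_mul_left]
  exact Summable.tsum_le_tsum (fun i => c.psi_le_bnd N i y) (c.psi_summable N y) (c.bnd_summable N)

lemma u_mono (N : ℕ) : Monotone (c.u N) := by
  intro y y' hyy
  exact Summable.tsum_le_tsum (fun i => c.psi_mono N i hyy) (c.psi_summable N y) (c.psi_summable N y')

lemma psi_continuous (N : ℕ) (i : ℕ × Finset ℕ) : Continuous (c.psi N i) := by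
  have hcl : ∀ b : ℝ, ∀ s : ℝ, Continuous (fun y : ℝ => c.h (cl (c.rho N i) (s * y + b))) := by
    intro b s
    apply ContinuousOn.comp_continuous c.hcont
    · apply Continuous.min _ continuous_const
      apply Continuous.max _ continuous_const
      exact (continuous_const.mul continuous_id).add continuous_const
    · intro y
      exact ⟨cl_nonneg (c.rho_nonneg N i) _, cl_le_one (c.rho_le_one N i) _⟩
  have h1 : Continuous (fun y : ℝ => c.h (cl (c.rho N i) (y - c.gA i))) := by
    have := hcl (-(c.gA i)) 1
    simpa [sub_eq_add_neg] using this
  have h2 : Continuous (fun y : ℝ => c.h (cl (c.rho N i) (c.gB i - y))) := by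
    have := hcl (c.gB i) (-1)
    have heq : (fun y : ℝ => c.h (cl (c.rho N i) ((-1) * y + c.gB i)))
        = (fun y : ℝ => c.h (cl (c.rho N i) (c.gB i - y))) := by
      funext y; congr 1; ring_nf
    rwa [heq] at this
  exact (h1.add continuous_const).sub h2

lemma u_continuous (N : ℕ) : Continuous (c.u N) := by
  apply continuous_tsum (c.psi_continuous N) (c.bnd_summable N)
  intro i y
  rw [Real.norm_eq_abs, abs_of_nonneg (c.psi_nonneg N i y)]
  exact c.psi_le_bnd N i y

def gg (y : ℝ) : ℝ := ∑' N, c.u N y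

lemma half_pow_summable (Cst : ℝ) : Summable (fun N : ℕ => (1/2:ℝ)^(N + 1) * Cst) := by
  have h1 : Summable (fun N : ℕ => ((1/2:ℝ) * Cst) * (1/2)^N) :=
    (summable_geometric_of_lt_one (by norm_num : (0:ℝ) ≤ 1/2) (by norm_num)).mul_left _
  exact h1.congr (fun N => by rw [pow_succ]; ring)

lemma u_summable (y : ℝ) : Summable (fun N => c.u N y) :=
  Summable.of_nonneg_of_le (fun N => c.u_nonneg N y) (fun N => c.u_le N y)
    (half_pow_summable c.Wt)

lemma gg_continuous : Continuous c.gg := by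
  apply continuous_tsum c.u_continuous (half_pow_summable c.Wt)
  intro N y
  rw [Real.norm_eq_abs, abs_of_nonneg (c.u_nonneg N y)]
  exact c.u_le N y

lemma gg_mono : Monotone c.gg := by
  intro y y' hyy
  exact Summable.tsum_le_tsum (fun N => c.u_mono N hyy) (c.u_summable y) (c.u_summable y')


/-! ### Finite subadditivity -/

lemma subadd_sum {κ : Type} (δ : κ → ℝ) :
    ∀ (J : Finset κ), (∀ i ∈ J, 0 ≤ δ i ∧ δ i ≤ 1) →
      ∀ t, 0 ≤ t → t ≤ 1 → t ≤ ∑ i ∈ J, δ i → c.h t ≤ ∑ i ∈ J, c.h (δ i) := by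
  classical
  intro J
  induction J using Finset.induction_on with
  | empty =>
    intro _ t ht0 ht1 hle
    simp only [Finset.sum_empty] at hle ⊢
    have : t = 0 := le_antisymm hle ht0
    rw [this, c.h0]
  | insert i J hiJ ih =>
    intro hmem t ht0 ht1 hle
    rw [Finset.sum_insert hiJ] at hle
    rw [Finset.sum_insert hiJ]
    have hδi := hmem i (Finset.mem_insert_self i J)
    have hmem' : ∀ j ∈ J, 0 ≤ δ j ∧ δ j ≤ 1 :=
      fun j hj => hmem j (Finset.mem_insert_of_mem hj)
    by_cases hti : t ≤ δ i
    · have h1 : c.h t ≤ c.h (δ i) := c.hm ht0 hti hδi.2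
      have h2 : 0 ≤ ∑ j ∈ J, c.h (δ j) :=
        Finset.sum_nonneg (fun j hj => c.hnn (hmem' j hj).1 (hmem' j hj).2)
      linarith
    · push_neg at hti
      have hsum0 : 0 ≤ ∑ j ∈ J, δ j :=
        Finset.sum_nonneg (fun j hj => (hmem' j hj).1)
      have h3 : c.h t ≤ c.h (δ i) + c.h (t - δ i) := by
        have hs := c.hsub (δ i) (t - δ i) ⟨hδi.1, hδi.2⟩
          ⟨by linarith, by linarith⟩ (by
            rw [show δ i + (t - δ i) = t by ring]; exact ⟨ht0, ht1⟩)
        rwa [show δ i + (t - δ i) = t by ring] at hs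
      have h5 : c.h (t - δ i) ≤ ∑ j ∈ J, c.h (δ j) :=
        ih hmem' (t - δ i) (by linarith) (by linarith) (by linarith)
      linarith

/-! ### The window estimate -/

lemma u_incr (N : ℕ) {w₁ w₂ : ℝ} (h0w : 0 ≤ w₁) (h1w : w₂ ≤ 1) (hlt : w₁ < w₂)
    (hr : w₂ - w₁ ≤ c.a (N + 1)) (hPend : w₁ ∈ c.P ∨ w₂ ∈ c.P) :
    c.h (w₂ - w₁) ≤ c.u N w₂ - c.u N w₁ := by
  set s := w₂ - w₁ with hs
  have hspos : 0 < s := by rw [hs]; linarith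
  have hs1 : s ≤ 1 := by rw [hs]; linarith
  -- step A: for every positive ε < s
  have stepA : ∀ ε : ℝ, 0 < ε → ε < s → c.h (s - ε) ≤ c.u N w₂ - c.u N w₁ := by
    intro ε hε hεs
    -- covering by gaps
    have hcov : Ioo w₁ w₂ ⊆ c.P ∪ ⋃ i : ℕ × Finset ℕ, (Ioo w₁ w₂ ∩ Ioo (c.gA i) (c.gB i)) := by
      intro y hy
      by_cases hyP : y ∈ c.P
      · exact Or.inl hyP
      · right
        obtain ⟨i, hi⟩ := c.gap_cover (le_of_lt (lt_of_le_of_lt h0w hy.1))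
          (le_trans hy.2.le h1w) hyP
        exact Set.mem_iUnion.mpr ⟨i, hy, hi⟩
    have hvol : ENNReal.ofReal s ≤
        ∑' i : ℕ × Finset ℕ, volume (Ioo w₁ w₂ ∩ Ioo (c.gA i) (c.gB i)) := by
      calc ENNReal.ofReal s = volume (Ioo w₁ w₂) := by rw [Real.volume_Ioo]
        _ ≤ volume (c.P ∪ ⋃ i : ℕ × Finset ℕ, (Ioo w₁ w₂ ∩ Ioo (c.gA i) (c.gB i))) :=
            measure_mono hcov
        _ ≤ volume c.P + volume (⋃ i : ℕ × Finset ℕ, (Ioo w₁ w₂ ∩ Ioo (c.gA i) (c.gB i))) :=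
            measure_union_le _ _
        _ = volume (⋃ i : ℕ × Finset ℕ, (Ioo w₁ w₂ ∩ Ioo (c.gA i) (c.gB i))) := by
            rw [c.P_vol, zero_add]
        _ ≤ ∑' i : ℕ × Finset ℕ, volume (Ioo w₁ w₂ ∩ Ioo (c.gA i) (c.gB i)) :=
            measure_iUnion_le _
    have hlt2 : ENNReal.ofReal (s - ε) <
        ∑' i : ℕ × Finset ℕ, volume (Ioo w₁ w₂ ∩ Ioo (c.gA i) (c.gB i)) :=
      lt_of_lt_of_le (by
        rw [ENNReal.ofReal_lt_ofReal_iff_of_nonneg (by linarith)]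
        linarith) hvol
    rw [ENNReal.tsum_eq_iSup_sum] at hlt2
    obtain ⟨J, hJ⟩ := lt_iSup_iff.mp hlt2
    -- overlap lengths
    set δ : ℕ × Finset ℕ → ℝ := fun i => min w₂ (c.gB i) - max w₁ (c.gA i) with hδ
    set d : ℕ × Finset ℕ → ℝ := fun i => max (δ i) 0 with hd
    have hvol_eq : ∀ i, volume (Ioo w₁ w₂ ∩ Ioo (c.gA i) (c.gB i)) = ENNReal.ofReal (d i) := by
      intro i
      rw [Set.Ioo_inter_Ioo, Real.volume_Ioo]
      rcases le_total (δ i) 0 with hneg | hpos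
      · rw [ENNReal.ofReal_of_nonpos hneg, hd]
        simp only [max_eq_right hneg]
        rw [ENNReal.ofReal_zero]
      · rw [hd]; simp only [max_eq_left hpos]; rfl
    have hJ2 : ENNReal.ofReal (s - ε) < ENNReal.ofReal (∑ i ∈ J, d i) := by
      rw [ENNReal.ofReal_sum_of_nonneg (fun i _ => le_max_right _ _)]
      calc ENNReal.ofReal (s - ε) < ∑ i ∈ J, volume (Ioo w₁ w₂ ∩ Ioo (c.gA i) (c.gB i)) := hJ
        _ = ∑ i ∈ J, ENNReal.ofReal (d i) := Finset.sum_congr rfl (fun i _ => hvol_eq i)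
    have hsum : s - ε < ∑ i ∈ J, d i := by
      rwa [ENNReal.ofReal_lt_ofReal_iff_of_nonneg (by linarith)] at hJ2
    -- per-gap increments
    have hdle : ∀ i, d i ≤ s := by
      intro i
      rw [hd, hδ]
      apply max_le _ hspos.le
      have h1 : min w₂ (c.gB i) ≤ w₂ := min_le_left _ _
      have h2 : w₁ ≤ max w₁ (c.gA i) := le_max_left _ _
      simp only []
      linarith
    have hper : ∀ i ∈ J, c.h (d i) ≤ c.psi N i w₂ - c.psi N i w₁ := by
      intro i _
      have hside : w₁ ∉ Ioo (c.gA i) (c.gB i) ∨ w₂ ∉ Ioo (c.gA i) (c.gB i) := by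
        rcases hPend with hP | hP
        · exact Or.inl (c.gap_disjoint i w₁ hP)
        · exact Or.inr (c.gap_disjoint i w₂ hP)
      have hincr := c.psi_incr N i hlt.le hside
      have hcl : cl (c.rho N i) (δ i) = d i := by
        rcases le_total (δ i) 0 with hneg | hpos
        · rw [cl_of_nonpos (c.rho_nonneg N i) hneg, hd]
          simp only [max_eq_right hneg]
        · have hdi : d i = δ i := by rw [hd]; simp only [max_eq_left hpos]
          rw [hdi, cl, max_eq_left hpos]
          apply min_eq_left
          rw [rho]
          apply le_min
          · have h2 : w₁ ≤ max w₁ (c.gA i) := le_max_left _ _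
            have h3 : min w₂ (c.gB i) ≤ c.gB i := min_le_right _ _
            have h4 : c.gA i ≤ max w₁ (c.gA i) := le_max_right _ _
            rw [hδ]; simp only []; linarith
          · have h3 : min w₂ (c.gB i) ≤ w₂ := min_le_left _ _
            have h2 : w₁ ≤ max w₁ (c.gA i) := le_max_left _ _
            have h5 : δ i ≤ s := by rw [hδ, hs]; dsimp only; linarith
            exact le_trans h5 hr
      rw [← hcl]
      exact hincr
    -- assemble
    have hd01 : ∀ i ∈ J, 0 ≤ d i ∧ d i ≤ 1 :=
      fun i _ => ⟨le_max_right _ _, (hdle i).trans hs1⟩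
    have hsubadd : c.h (s - ε) ≤ ∑ i ∈ J, c.h (d i) :=
      c.subadd_sum d J hd01 (s - ε) (by linarith) (by linarith) (by linarith)
    have hsum_incr : ∑ i ∈ J, (c.psi N i w₂ - c.psi N i w₁) ≤ c.u N w₂ - c.u N w₁ := by
      rw [u, u, ← Summable.tsum_sub (c.psi_summable N w₂) (c.psi_summable N w₁)]
      apply Summable.sum_le_tsum J (fun i _ => by
        have := c.psi_mono N i hlt.le; linarith)
        ((c.psi_summable N w₂).sub (c.psi_summable N w₁))
    calc c.h (s - ε) ≤ ∑ i ∈ J, c.h (d i) := hsubadd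
      _ ≤ ∑ i ∈ J, (c.psi N i w₂ - c.psi N i w₁) := Finset.sum_le_sum hper
      _ ≤ c.u N w₂ - c.u N w₁ := hsum_incr
  -- step B: pass to the limit
  have hseq : Tendsto (fun k : ℕ => s - s/(k+2)) atTop (𝓝 s) := by
    have h1 : Tendsto (fun k : ℕ => s/(k+2)) atTop (𝓝 0) := by
      have h3 : Tendsto (fun k : ℕ => s * (1/((k:ℝ)+1))) atTop (𝓝 0) := by
        have := tendsto_one_div_add_atTop_nhds_zero_nat.const_mul s
        simpa using this
      apply squeeze_zero (fun k => by positivity) (fun k => ?_) h3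
      have hck : (0:ℝ) ≤ (k:ℝ) := Nat.cast_nonneg k
      have hk1 : (0:ℝ) < (k:ℝ)+1 := by linarith
      rw [div_le_iff₀ (by linarith), mul_comm s]
      have goal_eq : 1/((k:ℝ)+1) * s * ((k:ℝ)+2) = s * (((k:ℝ)+2)/((k:ℝ)+1)) := by ring
      rw [goal_eq]
      have h21 : (1:ℝ) ≤ ((k:ℝ)+2)/((k:ℝ)+1) := by rw [le_div_iff₀ hk1]; linarith
      nlinarith [hspos.le]
    simpa using (tendsto_const_nhds (x := s) (f := atTop)).sub h1
  have hmem : ∀ k : ℕ, s - s/(k+2) ∈ Icc (0:ℝ) 1 := by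
    intro k
    constructor
    · have : s/(k+2) ≤ s := by
        apply div_le_self hspos.le
        push_cast; linarith [Nat.cast_nonneg (α := ℝ) k]
      linarith
    · have : 0 ≤ s/(k+2) := by positivity
      linarith
  have hhs : Tendsto (fun k : ℕ => c.h (s - s/(k+2))) atTop (𝓝 (c.h s)) := by
    have hcw : ContinuousWithinAt c.h (Icc 0 1) s := c.hcont s ⟨hspos.le, hs1⟩
    exact hcw.tendsto.comp (tendsto_nhdsWithin_of_tendsto_nhds_of_eventually_within _
      hseq (Eventually.of_forall hmem))
  apply le_of_tendsto hhs
  apply Eventually.of_forall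
  intro k
  apply stepA
  · positivity
  · have hk2 : (1:ℝ) < (k:ℝ) + 2 := by push_cast; linarith [Nat.cast_nonneg (α := ℝ) k]
    rw [div_lt_iff₀ (by linarith)]
    nlinarith

/-! ### Multi-layer estimate -/

lemma key_incr (M : ℕ) {w₁ w₂ : ℝ} (h0w : 0 ≤ w₁) (h1w : w₂ ≤ 1) (hlt : w₁ < w₂)
    (hr : w₂ - w₁ ≤ c.a (M + 1)) (hPend : w₁ ∈ c.P ∨ w₂ ∈ c.P) :
    (M + 1 : ℝ) * c.h (w₂ - w₁) ≤ c.gg w₂ - c.gg w₁ := by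
  have per : ∀ N ∈ Finset.range (M + 1), c.h (w₂ - w₁) ≤ c.u N w₂ - c.u N w₁ := by
    intro N hN
    apply c.u_incr N h0w h1w hlt _ hPend
    exact hr.trans (c.a_anti (by
      have := Finset.mem_range.mp hN; omega))
  calc (M + 1 : ℝ) * c.h (w₂ - w₁)
      = ∑ _N ∈ Finset.range (M + 1), c.h (w₂ - w₁) := by
        rw [Finset.sum_const, Finset.card_range, nsmul_eq_mul]; push_cast; ring
    _ ≤ ∑ N ∈ Finset.range (M + 1), (c.u N w₂ - c.u N w₁) := Finset.sum_le_sum per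
    _ ≤ c.gg w₂ - c.gg w₁ := by
        rw [gg, gg, ← Summable.tsum_sub (c.u_summable w₂) (c.u_summable w₁)]
        apply Summable.sum_le_tsum _ (fun N _ => by
          have := c.u_mono N hlt.le; linarith)
          ((c.u_summable w₂).sub (c.u_summable w₁))


end Ctx
end FastIncr

/-- Let `h : [0,1] → ℝ` be continuous, strictly increasing and subadditive with `h 0 = 0`,
extended to `[-1,1]` by `h (-x) = - h x`. Then there are a nonempty perfect `P ⊆ [0,1]` and
a non-decreasing continuous `g : [0,1] → ℝ` such that for every `p ∈ P`,
`(g x - g p) / h (x - p) → ∞` as `x → p` within `[0,1] \ {p}`. -/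
theorem exists_perfect_set_fast_increase (h : ℝ → ℝ)
    (hcont : ContinuousOn h (Icc 0 1)) (hmono : StrictMonoOn h (Icc 0 1))
    (h0 : h 0 = 0)
    (hsub : ∀ s t : ℝ, s ∈ Icc (0 : ℝ) 1 → t ∈ Icc (0 : ℝ) 1 → s + t ∈ Icc (0 : ℝ) 1 →
      h (s + t) ≤ h s + h t)
    (hodd : ∀ x ∈ Icc (0 : ℝ) 1, h (-x) = - h x) :
    ∃ (P : Set ℝ) (g : ℝ → ℝ), P ⊆ Icc 0 1 ∧ P.Nonempty ∧ Perfect P ∧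
      ContinuousOn g (Icc 0 1) ∧ MonotoneOn g (Icc 0 1) ∧
      ∀ p ∈ P, Tendsto (fun x : ℝ => (g x - g p) / h (x - p))
        (𝓝[Icc 0 1 \ {p}] p) atTop := by
  classical
  have h1pos : 0 < h 1 := by
    have := hmono (left_mem_Icc.mpr zero_le_one) (right_mem_Icc.mpr zero_le_one) one_pos
    rwa [h0] at this
  -- we can find arbitrarily small t with h t arbitrarily small
  have hsmall : ∀ e1 e2 : ℝ, 0 < e1 → 0 < e2 → ∃ t, 0 < t ∧ t ≤ e1 ∧ h t ≤ e2 := by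
    intro e1 e2 hp1 hp2
    set q := min e1 1 with hq
    have hqpos : 0 < q := lt_min hp1 one_pos
    have hq1 : q ≤ 1 := min_le_right _ _
    have hqe : q ≤ e1 := min_le_left _ _
    have htd : Tendsto (fun k : ℕ => q/(k+1)) atTop (𝓝 0) := by
      have h3 : Tendsto (fun k : ℕ => q * (1/((k:ℝ)+1))) atTop (𝓝 0) := by
        simpa using tendsto_one_div_add_atTop_nhds_zero_nat.const_mul q
      exact h3.congr (fun k => mul_one_div q _)
    have hmem : ∀ k : ℕ, q/(k+1) ∈ Icc (0:ℝ) 1 := by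
      intro k
      have hck : (0:ℝ) ≤ (k:ℝ) := Nat.cast_nonneg k
      constructor
      · positivity
      · have hd : q/((k:ℝ)+1) ≤ q := div_le_self hqpos.le (by linarith)
        linarith
    have hch : Tendsto (fun k : ℕ => h (q/(k+1))) atTop (𝓝 0) := by
      have hcw : ContinuousWithinAt h (Icc 0 1) 0 := hcont 0 (left_mem_Icc.mpr zero_le_one)
      have := hcw.tendsto.comp (tendsto_nhdsWithin_of_tendsto_nhds_of_eventually_within _
        htd (Eventually.of_forall hmem))
      rwa [h0] at this
    have hev : ∀ᶠ k : ℕ in atTop, h (q/(k+1)) < e2 := hch.eventually (gt_mem_nhds hp2)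
    obtain ⟨k, hk⟩ := hev.exists
    have hck : (0:ℝ) ≤ (k:ℝ) := Nat.cast_nonneg k
    exact ⟨q/(k+1), by positivity,
      le_trans (div_le_self hqpos.le (by linarith)) hqe, hk.le⟩
  choose! F hF1 hF2 hF3 using hsmall
  set a : ℕ → ℝ := fun n =>
    Nat.rec (F (1/4) (h 1)) (fun m am => F (am/4) ((1/8)^(m+1) * h 1)) n with ha
  have ha0def : a 0 = F (1/4) (h 1) := rfl
  have hastep : ∀ n, a (n+1) = F (a n / 4) ((1/8)^(n+1) * h 1) := fun n => rfl
  have hpow8 : ∀ n : ℕ, (0:ℝ) < (1/8)^n * h 1 := fun n => by positivity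
  have hap : ∀ n, 0 < a n := by
    intro n
    induction n with
    | zero => rw [ha0def]; exact (hF1 _ _ (by norm_num) h1pos)
    | succ n ih => rw [hastep]; exact (hF1 _ _ (by linarith) (hpow8 (n+1)))
  have haq : ∀ n, a (n+1) ≤ a n / 4 := fun n => by
    rw [hastep]; exact hF2 _ _ (by linarith [hap n]) (hpow8 (n+1))
  have hahb : ∀ n, h (a n) ≤ (1/8)^n * h 1 := by
    intro n
    cases n with
    | zero =>
      rw [ha0def]
      have := hF3 (1/4) (h 1) (by norm_num) h1pos
      simpa using this
    | succ n => rw [hastep]; exact hF3 _ _ (by linarith [hap n]) (hpow8 (n+1))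
  have ha0 : a 0 ≤ 1/4 := by rw [ha0def]; exact hF2 _ _ (by norm_num) h1pos
  set c : FastIncr.Ctx := ⟨h, a, hcont, hmono, h0, hsub, hap, haq, ha0, hahb⟩ with hcdef
  refine ⟨c.P, c.gg, c.P_sub', c.P_nonempty, c.P_perfect, c.gg_continuous.continuousOn,
    (c.gg_mono.monotoneOn _), ?_⟩
  intro p hp
  have hpIcc : p ∈ Icc (0:ℝ) 1 := c.P_sub' hp
  rw [tendsto_atTop]
  intro b
  obtain ⟨M, hM⟩ := exists_nat_ge b
  have haM : 0 < a (M+1) := hap (M+1)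
  filter_upwards [mem_nhdsWithin_of_mem_nhds (Metric.closedBall_mem_nhds p haM),
    self_mem_nhdsWithin] with x hx1 hx2
  obtain ⟨hxIcc, hxne⟩ := hx2
  have hxne' : x ≠ p := hxne
  have hdist : |x - p| ≤ a (M+1) := by
    rw [← Real.dist_eq]; exact Metric.mem_closedBall.mp hx1
  rcases lt_or_gt_of_ne hxne' with hlt | hgt
  · -- x < p : use the left window
    have hs1 : p - x ≤ a (M+1) := by
      rw [abs_sub_comm, abs_of_pos (by linarith)] at hdist
      exact hdist
    have hkeym : ((M:ℝ) + 1) * h (p - x) ≤ c.gg p - c.gg x :=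
      c.key_incr M hxIcc.1 hpIcc.2 hlt (by linarith) (Or.inr hp)
    have hhpos : 0 < h (p - x) :=
      c.hpos (by linarith) (by linarith [hpIcc.2, hxIcc.1])
    have hxodd : h (x - p) = - h (p - x) := by
      have := hodd (p - x) ⟨by linarith, by linarith [hpIcc.2, hxIcc.1]⟩
      rw [show -(p - x) = x - p by ring] at this
      exact this
    have hrw : (c.gg x - c.gg p) / h (x - p) = (c.gg p - c.gg x) / h (p - x) := by
      rw [hxodd, div_neg, ← neg_div]
      congr 1
      ring
    rw [hrw, le_div_iff₀ hhpos]
    have hbM : b * h (p - x) ≤ ((M:ℝ) + 1) * h (p - x) :=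
      mul_le_mul_of_nonneg_right (by linarith) hhpos.le
    linarith
  · -- p < x : use the right window
    have hs1 : x - p ≤ a (M+1) := by
      rw [abs_of_pos (by linarith)] at hdist
      exact hdist
    have hkeym : ((M:ℝ) + 1) * h (x - p) ≤ c.gg x - c.gg p :=
      c.key_incr M hpIcc.1 hxIcc.2 hgt (by linarith) (Or.inl hp)
    have hhpos : 0 < h (x - p) :=
      c.hpos (by linarith) (by linarith [hxIcc.2, hpIcc.1])
    rw [le_div_iff₀ hhpos]
    have hbM : b * h (x - p) ≤ ((M:ℝ) + 1) * h (x - p) :=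
      mul_le_mul_of_nonneg_right (by linarith) hhpos.le
    linarith
end
end
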